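/- Let f : ℝ^(n+1) → ℝ be differentiable with ⟪gradient f p, gradient f p⟫ = 1 for every p ∈ ℝ^(n+1) (an eikonal function, i.e. transnormal with warping function ϱ ≡ 1). In the Minkowski product ℝ × ℝ^(n+1) with η((s, x), (t, y)) = -s * t + ⟪x, y⟫, set ξ(p) := (1, gradient f p). Then for every p ∈ ℝ^(n+1): (i) fderiv ℝ f p (gradient f p) = 1, so ξ(p) = (fderiv ℝ f p (gradient f p), gradient f p) is a tangent vector to the graph M = {(f p, p) : p ∈ ℝ^(n+1)} at (f p, p); (ii) η(ξ(p), ξ(p)) = 0; (iii) η(ξ(p), (fderiv ℝ f p v, v)) = 0 for every v ∈ ℝ^(n+1). Hence every tangent vector to the graph is η-orthogonal to the nonzero tangent vector ξ(p), so the metric induced by η on the graph of f is degenerate: the graph of an eikonal function is a null hypersurface of Minkowski space. -/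

import Mathlib

/-! Since `gradient f p` is the Riesz representative of `fderiv ℝ f p`, the vector
`(1, gradient f p)` is η-orthogonal to every tangent vector `(fderiv ℝ f p v, v)` of the graph,
for any `f`. The eikonal equation gives `fderiv ℝ f p (gradient f p) = ‖gradient f p‖² = 1`, so
this vector is itself tangent to the graph, hence η-orthogonal to itself, i.e. null. -/

noncomputable section

def etaProd {n : ℕ} (x y : ℝ × EuclideanSpace ℝ (Fin (n + 1))) : ℝ :=
  -(x.1 * y.1) + (inner ℝ x.2 y.2 : ℝ)

theorem etaProd_one_gradient_fderiv_eq_zero {n : ℕ} (f : EuclideanSpace ℝ (Fin (n + 1)) → ℝ)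
    (p v : EuclideanSpace ℝ (Fin (n + 1))) :
    etaProd ((1 : ℝ), gradient f p) (fderiv ℝ f p v, v) = 0 := by
  rw [etaProd, one_mul, inner_gradient_left, neg_add_cancel]

theorem graph_of_eikonal_is_null_general {n : ℕ}
    (f : EuclideanSpace ℝ (Fin (n + 1)) → ℝ)
    (heik : ∀ p, (inner ℝ (gradient f p) (gradient f p) : ℝ) = 1) :
    ∀ p : EuclideanSpace ℝ (Fin (n + 1)),
      fderiv ℝ f p (gradient f p) = 1 ∧
      etaProd ((1 : ℝ), gradient f p) ((1 : ℝ), gradient f p) = 0 ∧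
      ∀ v : EuclideanSpace ℝ (Fin (n + 1)),
        etaProd ((1 : ℝ), gradient f p) (fderiv ℝ f p v, v) = 0 := by
  intro p
  have htangent : fderiv ℝ f p (gradient f p) = 1 := by
    rw [← inner_gradient_left, heik]
  refine ⟨htangent, ?_, etaProd_one_gradient_fderiv_eq_zero f p⟩
  simpa only [htangent] using etaProd_one_gradient_fderiv_eq_zero f p (gradient f p)

/-- The graph of an eikonal (transnormal, `ϱ ≡ 1`) function is a null
hypersurface of Minkowski space: `ξ(p) = (1, gradient f p)` is tangent to the graph, null,
and η-orthogonal to every tangent vector of the graph. -/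
theorem graph_of_eikonal_is_null {n : ℕ}
    (f : EuclideanSpace ℝ (Fin (n + 1)) → ℝ)
    (hf : Differentiable ℝ f)
    (heik : ∀ p, (inner ℝ (gradient f p) (gradient f p) : ℝ) = 1) :
    ∀ p : EuclideanSpace ℝ (Fin (n + 1)),
      fderiv ℝ f p (gradient f p) = 1 ∧
      etaProd ((1 : ℝ), gradient f p) ((1 : ℝ), gradient f p) = 0 ∧
      ∀ v : EuclideanSpace ℝ (Fin (n + 1)),
        etaProd ((1 : ℝ), gradient f p) (fderiv ℝ f p v, v) = 0 :=
  graph_of_eikonal_is_null_general f heik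

end
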